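/- arXiv:2506.12954 — 2 statements merged into one kernel-verified Lean document; each statement's English description precedes it below -/
import Mathlib

section
/- (Interpolation error away from the initial time on a quasi-graded mesh.) Let σ ∈ (0,1) ∪ (1,2) and let the mesh 0 = t_0 < t_1 < ⋯ < t_M = T be quasi-graded with parameter r ≥ 1 and constants c₁, c₂. Let u be twice continuously differentiable on (0,T] with |u″(t)| ≤ C·t^{σ−2} for t ∈ (0,T], and let u^I be its piecewise-linear interpolant on the mesh. Then there exists C′ > 0, depending only on C, σ, r, c₁, c₂, such that for all 2 ≤ j ≤ m ≤ M and all s ∈ (t_{j−1}, t_j): |u(s) − u^I(s)| ≤ C′ · min{ τ^{2/r} s^{σ−2/r}, (t_m − s) τ^{1/r} s^{σ−1−1/r} }. -/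
/-!
On a cell `[t_{j-1}, t_j]` with `j ≥ 2` we have `τ ≤ t_{j-1}`, so the quasi-graded step condition
forces `t_j ≤ K t_{j-1}` with `K = 2 + (2c₂)^r`. Hence the whole cell is comparable to `s`: the
step is `h_j ≲ τ^{1/r} s^{1-1/r}` and `|u''| ≲ s^{σ-2}` on the cell. The classical estimate
`|u - u^I| ≤ ½ max|u''| (s - t_{j-1}) (t_j - s)`, obtained from the convexity of
`u ∓ ½ B (x - t_{j-1}) (t_j - x)`, together with `(s - t_{j-1}) (t_j - s) ≤ h_j min {h_j, t_m - s}`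
yields both bounds.
-/

open Set

noncomputable def chord (f : ℝ → ℝ) (a b x : ℝ) : ℝ := f a + (x - a) * (f b - f a) / (b - a)

lemma ConvexOn.le_chord {f : ℝ → ℝ} {a b x : ℝ} (hf : ConvexOn ℝ (Icc a b) f)
    (hx : x ∈ Icc a b) : f x ≤ chord f a b x := by
  rcases hx.1.eq_or_lt with rfl | hax
  · simp [chord]
  rcases hx.2.eq_or_lt with rfl | hxb
  · rw [chord, mul_div_cancel_left₀ _ (sub_ne_zero.2 hax.ne')]; linarith
  have h := hf.secant_mono_aux1 (left_mem_Icc.2 (hax.trans hxb).le)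
    (right_mem_Icc.2 (hax.trans hxb).le) hax hxb
  rw [chord, ← sub_le_iff_le_add', le_div_iff₀ (sub_pos.2 (hax.trans hxb))]
  linarith

lemma sub_chord_le_of_neg_le_deriv2 {f f' f'' : ℝ → ℝ} {a b B x : ℝ}
    (hf : ContinuousOn f (Icc a b)) (hf' : ∀ y ∈ Ioo a b, HasDerivAt f (f' y) y)
    (hf'' : ∀ y ∈ Ioo a b, HasDerivAt f' (f'' y) y) (hB : ∀ y ∈ Ioo a b, -B ≤ f'' y)
    (hx : x ∈ Icc a b) : f x - chord f a b x ≤ B / 2 * ((x - a) * (b - x)) := by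
  set q : ℝ → ℝ := fun y ↦ B / 2 * ((y - a) * (b - y))
  have hq' (y : ℝ) : HasDerivAt q (B / 2 * (a + b - 2 * y)) y := by
    have := ((hasDerivAt_id' y).sub_const a).mul ((hasDerivAt_id' y).const_sub b)
    exact (this.const_mul (B / 2)).congr_deriv (by ring)
  have hq'' (y : ℝ) : HasDerivAt (fun y ↦ B / 2 * (a + b - 2 * y)) (-B) y := by
    have := (((hasDerivAt_id' y).const_mul 2).const_sub (a + b)).const_mul (B / 2)
    exact this.congr_deriv (by ring)
  -- `q` vanishes at both endpoints and `q'' = -B`, so `f - q` is convex with the same chord as `f`.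
  have hconv : ConvexOn ℝ (Icc a b) (fun y ↦ f y - q y) := by
    refine convexOn_of_hasDerivWithinAt2_nonneg (convex_Icc a b) (hf.sub (by fun_prop))
      (f' := fun y ↦ f' y - B / 2 * (a + b - 2 * y)) (f'' := fun y ↦ f'' y + B) ?_ ?_ ?_ <;>
      rw [interior_Icc] <;> intro y hy
    · exact ((hf' y hy).sub (hq' y)).hasDerivWithinAt
    · exact ((hf'' y hy).sub (hq'' y)).hasDerivWithinAt.congr_deriv (by ring)
    · linarith [hB y hy]
  have h := hconv.le_chord hx
  simp only [chord, q, sub_self, zero_mul, mul_zero, sub_zero] at h ⊢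
  linarith

lemma abs_sub_chord_le {f f' f'' : ℝ → ℝ} {a b B x : ℝ}
    (hf : ContinuousOn f (Icc a b)) (hf' : ∀ y ∈ Ioo a b, HasDerivAt f (f' y) y)
    (hf'' : ∀ y ∈ Ioo a b, HasDerivAt f' (f'' y) y) (hB : ∀ y ∈ Ioo a b, |f'' y| ≤ B)
    (hx : x ∈ Icc a b) : |f x - chord f a b x| ≤ B / 2 * ((x - a) * (b - x)) := by
  have upper := sub_chord_le_of_neg_le_deriv2 hf hf' hf'' (fun y hy ↦ (abs_le.1 (hB y hy)).1) hx
  have lower := sub_chord_le_of_neg_le_deriv2 (f := fun y ↦ -f y) hf.neg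
    (fun y hy ↦ (hf' y hy).neg) (fun y hy ↦ (hf'' y hy).neg)
    (fun y hy ↦ neg_le_neg (abs_le.1 (hB y hy)).2) hx
  have hneg : chord (fun y ↦ -f y) a b x = -chord f a b x := by simp only [chord]; ring
  rw [hneg] at lower
  exact abs_le.2 ⟨by linarith, upper⟩

lemma monotoneOn_Iic_of_lt_succ {t : ℕ → ℝ} {M : ℕ}
    (h : ∀ j, 1 ≤ j → j ≤ M → t (j - 1) < t j) : MonotoneOn t (Iic M) :=
  monotoneOn_of_le_succ ordConnected_Iic fun i _ _ hi ↦ by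
    simpa using (h (i + 1) (by omega) (by simpa using hi)).le

noncomputable def meshRatio (c r : ℝ) : ℝ := 2 + (2 * c) ^ r

lemma meshRatio_pos {c : ℝ} (r : ℝ) (hc : 0 ≤ c) : 0 < meshRatio c r := by
  unfold meshRatio; positivity

lemma le_meshRatio_mul_of_sub_le {r c τ a b : ℝ} (hr : 0 < r) (hc : 0 < c) (hτ : 0 ≤ τ)
    (hτa : τ ≤ a) (hab : a ≤ b) (h : b - a ≤ c * τ ^ (1 / r) * b ^ (1 - 1 / r)) :
    b ≤ meshRatio c r * a := by
  have ha : 0 ≤ a := hτ.trans hτa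
  have hb : 0 ≤ b := ha.trans hab
  unfold meshRatio
  rcases le_or_gt b (2 * a) with hb2 | hb2
  · nlinarith [Real.rpow_nonneg (by positivity : (0 : ℝ) ≤ 2 * c) r]
  have hb0 : 0 < b := by linarith
  have hτa' : τ ^ (1 / r) ≤ a ^ (1 / r) := Real.rpow_le_rpow hτ hτa (by positivity)
  have hsplit : b = b ^ (1 / r) * b ^ (1 - 1 / r) := by
    rw [← Real.rpow_add hb0, add_sub_cancel, Real.rpow_one]
  -- For `b > 2a` the step exceeds `b / 2`, which pins down `b ^ (1 / r)`.
  have hroot : b ^ r⁻¹ < 2 * c * a ^ r⁻¹ := by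
    have hpos : 0 < b ^ (1 - 1 / r) := Real.rpow_pos_of_pos hb0 _
    have hstep_le := mul_le_mul_of_nonneg_right (mul_le_mul_of_nonneg_left hτa' hc.le) hpos.le
    rw [← one_div]
    refine lt_of_mul_lt_mul_right ?_ hpos.le
    linarith
  rw [Real.rpow_inv_lt_iff_of_pos hb (by positivity) hr, Real.mul_rpow (by positivity)
    (by positivity), Real.rpow_inv_rpow ha hr.ne'] at hroot
  linarith

lemma rpow_le_rpow_mul_of_le_mul {a s K p : ℝ} (hs : 0 < s) (hK : 0 < K) (hsa : s ≤ K * a)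
    (hp : p ≤ 0) : a ^ p ≤ K ^ (-p) * s ^ p := by
  have hsa' : s / K ≤ a := by rwa [div_le_iff₀' hK]
  calc a ^ p ≤ (s / K) ^ p := Real.rpow_le_rpow_of_nonpos (by positivity) hsa' hp
    _ = K ^ (-p) * s ^ p := by
      rw [Real.div_rpow hs.le hK.le, Real.rpow_neg hK.le]; ring

lemma min_mul_le_max_mul_min {L P Y : ℝ} (hP : 0 ≤ P) (hY : 0 ≤ Y) :
    min (L * P) Y ≤ max L 1 * min P Y := by
  rw [mul_min_of_nonneg _ _ (zero_le_one.trans (le_max_right L 1))]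
  exact min_le_min (mul_le_mul_of_nonneg_right (le_max_left L 1) hP)
    (le_mul_of_one_le_left hY (le_max_right L 1))

noncomputable def interpConst (σ r c C : ℝ) : ℝ :=
  C / 2 * meshRatio c r ^ (2 - σ) * (c * meshRatio c r ^ (1 - 1 / r)) *
    max (c * meshRatio c r ^ (1 - 1 / r)) 1

lemma interpConst_pos {σ r c C : ℝ} (hc : 0 < c) (hC : 0 < C) : 0 < interpConst σ r c C := by
  have := meshRatio_pos r hc.le
  unfold interpConst; positivity

lemma abs_sub_chord_le_of_quasiGraded {u : ℝ → ℝ} {σ r c C τ a b e s : ℝ} (hσ : σ < 2)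
    (hr : 1 ≤ r) (hc : 0 < c) (hC : 0 ≤ C) (hτ : 0 < τ) (hτa : τ ≤ a) (hs : s ∈ Ioo a b)
    (hbe : b ≤ e) (hstep : b - a ≤ c * τ ^ (1 / r) * b ^ (1 - 1 / r))
    (hu : ∀ x ∈ Icc a b, DifferentiableAt ℝ u x)
    (hu' : ∀ x ∈ Icc a b, DifferentiableAt ℝ (deriv u) x)
    (hu'' : ∀ x ∈ Icc a b, |deriv (deriv u) x| ≤ C * x ^ (σ - 2)) :
    |u s - chord u a b s| ≤ interpConst σ r c C *
      min (τ ^ (2 / r) * s ^ (σ - 2 / r)) ((e - s) * τ ^ (1 / r) * s ^ (σ - 1 - 1 / r)) := by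
  obtain ⟨has, hsb⟩ := hs
  have ha : 0 < a := hτ.trans_le hτa
  have hs0 : 0 < s := ha.trans has
  set K := meshRatio c r
  set L := c * K ^ (1 - 1 / r)
  set P := τ ^ (1 / r) * s ^ (1 - 1 / r)
  have hK : 0 < K := meshRatio_pos r hc.le
  have hbK : b ≤ K * a :=
    le_meshRatio_mul_of_sub_le (by linarith) hc hτ.le hτa (has.trans hsb).le hstep
  have hsK : s ≤ K * a := hsb.le.trans hbK
  have hP : 0 ≤ P := by positivity
  have hstep' : b - a ≤ L * P := by
    calc b - a ≤ c * τ ^ (1 / r) * b ^ (1 - 1 / r) := hstep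
      _ ≤ c * τ ^ (1 / r) * (K * s) ^ (1 - 1 / r) := by
        have : 1 / r ≤ 1 := (div_le_one (by linarith)).2 hr
        gcongr
        · linarith
        · exact hbK.trans (by gcongr)
      _ = L * P := by rw [Real.mul_rpow hK.le hs0.le]; ring
  have herr : |u s - chord u a b s| ≤ C * a ^ (σ - 2) / 2 * ((s - a) * (b - s)) := by
    refine abs_sub_chord_le (fun x hx ↦ (hu x hx).continuousAt.continuousWithinAt)
      (fun x hx ↦ (hu x (Ioo_subset_Icc_self hx)).hasDerivAt)
      (fun x hx ↦ (hu' x (Ioo_subset_Icc_self hx)).hasDerivAt) (fun x hx ↦ ?_) ⟨has.le, hsb.le⟩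
    exact (hu'' x (Ioo_subset_Icc_self hx)).trans
      (mul_le_mul_of_nonneg_left (Real.rpow_le_rpow_of_nonpos ha hx.1.le (by linarith)) hC)
  have hprod : (s - a) * (b - s) ≤ (b - a) * min (b - a) (e - s) := by
    rw [mul_min_of_nonneg _ _ (by linarith)]
    exact le_min (by nlinarith) (by nlinarith)
  have hmin : (b - a) * min (b - a) (e - s) ≤ L * P * (max L 1 * min P (e - s)) :=
    mul_le_mul hstep' ((min_le_min_right _ hstep').trans (min_mul_le_max_mul_min hP (by linarith)))
      (le_min (by linarith) (by linarith)) (by positivity)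
  have hapow : a ^ (σ - 2) ≤ K ^ (2 - σ) * s ^ (σ - 2) := by
    simpa only [neg_sub] using rpow_le_rpow_mul_of_le_mul hs0 hK hsK (by linarith : σ - 2 ≤ 0)
  have hsplit : s ^ (σ - 2) * P * min P (e - s) =
      min (τ ^ (2 / r) * s ^ (σ - 2 / r)) ((e - s) * τ ^ (1 / r) * s ^ (σ - 1 - 1 / r)) := by
    rw [mul_min_of_nonneg _ _ (by positivity)]
    congr 1
    · rw [show 2 / r = 1 / r + 1 / r by ring, Real.rpow_add hτ,
        show σ - (1 / r + 1 / r) = (σ - 2) + (1 - 1 / r) + (1 - 1 / r) by ring,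
        Real.rpow_add hs0, Real.rpow_add hs0]
      ring
    · rw [show σ - 1 - 1 / r = (σ - 2) + (1 - 1 / r) by ring, Real.rpow_add hs0]
      ring
  calc |u s - chord u a b s| ≤ C * a ^ (σ - 2) / 2 * ((s - a) * (b - s)) := herr
    _ ≤ C * (K ^ (2 - σ) * s ^ (σ - 2)) / 2 * (L * P * (max L 1 * min P (e - s))) := by
      have : 0 ≤ (s - a) * (b - s) := mul_nonneg (by linarith) (by linarith)
      gcongr C * ?_ / 2 * ?_
      exact hprod.trans hmin
    _ = C / 2 * K ^ (2 - σ) * L * max L 1 * (s ^ (σ - 2) * P * min P (e - s)) := by ring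
    _ = _ := by rw [hsplit]; rfl
theorem stmt10_general (σ r c₁ c₂ C : ℝ) (hσ : σ ∈ Set.Ioo (0:ℝ) 1 ∪ Set.Ioo (1:ℝ) 2)
    (hr : 1 ≤ r) (hc₂ : 0 < c₂) (hC : 0 < C) :
    ∃ C' : ℝ, 0 < C' ∧
      ∀ (T : ℝ), 0 < T → ∀ (M : ℕ) (t : ℕ → ℝ),
        t 0 = 0 → t M = T →
        (∀ j, 1 ≤ j → j ≤ M → t (j - 1) < t j) →
        c₁ * (M : ℝ) ^ (-r) ≤ t 1 → t 1 ≤ c₂ * (M : ℝ) ^ (-r) →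
        (∀ j, 1 ≤ j → j ≤ M →
          t j - t (j - 1) ≤ c₂ * (t 1) ^ (1 / r) * (t j) ^ (1 - 1 / r)) →
        ∀ u uI : ℝ → ℝ,
          (∀ s ∈ Set.Ioc (0:ℝ) T, DifferentiableAt ℝ u s) →
          (∀ s ∈ Set.Ioc (0:ℝ) T, DifferentiableAt ℝ (deriv u) s) →
          ContinuousOn (deriv (deriv u)) (Set.Ioc 0 T) →
          (∀ s ∈ Set.Ioc (0:ℝ) T, |deriv (deriv u) s| ≤ C * s ^ (σ - 2)) →
          (∀ j, 1 ≤ j → j ≤ M → ∀ s ∈ Set.Icc (t (j - 1)) (t j),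
            uI s = u (t (j - 1)) +
              (s - t (j - 1)) * (u (t j) - u (t (j - 1))) / (t j - t (j - 1))) →
          ∀ j m : ℕ, 2 ≤ j → j ≤ m → m ≤ M →
            ∀ s ∈ Set.Ioo (t (j - 1)) (t j),
              |u s - uI s| ≤ C' * min ((t 1) ^ (2 / r) * s ^ (σ - 2 / r))
                ((t m - s) * (t 1) ^ (1 / r) * s ^ (σ - 1 - 1 / r)) := by
  have hσ2 : σ < 2 := by rcases hσ with h | h <;> linarith [h.2]
  refine ⟨interpConst σ r c₂ C, interpConst_pos hc₂ hC, ?_⟩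
  intro T _ M t ht0 htM hstep _ _ hgraded u uI hu hu' _ hu'' huI j m hj hjm hmM s hs
  have hmono := monotoneOn_Iic_of_lt_succ hstep
  have hτ : 0 < t 1 := by simpa [ht0] using hstep 1 le_rfl (by omega)
  have hτa : t 1 ≤ t (j - 1) := hmono (show 1 ≤ M by omega) (show j - 1 ≤ M by omega) (by omega)
  have hbT : t j ≤ T := htM ▸ hmono (show j ≤ M by omega) (show M ≤ M from le_rfl) (by omega)
  have hmesh : Icc (t (j - 1)) (t j) ⊆ Ioc 0 T := fun x hx ↦
    ⟨hτ.trans_le (hτa.trans hx.1), hx.2.trans hbT⟩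
  rw [huI j (by omega) (by omega) s (Ioo_subset_Icc_self hs)]
  exact abs_sub_chord_le_of_quasiGraded hσ2 hr hc₂ hC.le hτ hτa hs
    (hmono (show j ≤ M by omega) (show m ≤ M from hmM) hjm) (hgraded j (by omega) (by omega))
    (fun x hx ↦ hu x (hmesh hx)) (fun x hx ↦ hu' x (hmesh hx)) (fun x hx ↦ hu'' x (hmesh hx))

/-- interpolation error away from the initial time on a
quasi-graded mesh:
`|u(s) − u^I(s)| ≤ C′ min{ τ^{2/r} s^{σ−2/r}, (t_m − s) τ^{1/r} s^{σ−1−1/r} }`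
for `s ∈ (t_{j−1}, t_j)`, `2 ≤ j ≤ m ≤ M`. -/
theorem stmt10 (σ r c₁ c₂ C : ℝ) (hσ : σ ∈ Set.Ioo (0:ℝ) 1 ∪ Set.Ioo (1:ℝ) 2)
    (hr : 1 ≤ r) (hc₁ : 0 < c₁) (hc₂ : 0 < c₂) (hC : 0 < C) :
    ∃ C' : ℝ, 0 < C' ∧
      ∀ (T : ℝ), 0 < T → ∀ (M : ℕ) (t : ℕ → ℝ),
        t 0 = 0 → t M = T →
        (∀ j, 1 ≤ j → j ≤ M → t (j - 1) < t j) →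
        c₁ * (M : ℝ) ^ (-r) ≤ t 1 → t 1 ≤ c₂ * (M : ℝ) ^ (-r) →
        (∀ j, 1 ≤ j → j ≤ M →
          t j - t (j - 1) ≤ c₂ * (t 1) ^ (1 / r) * (t j) ^ (1 - 1 / r)) →
        ∀ u uI : ℝ → ℝ,
          (∀ s ∈ Set.Ioc (0:ℝ) T, DifferentiableAt ℝ u s) →
          (∀ s ∈ Set.Ioc (0:ℝ) T, DifferentiableAt ℝ (deriv u) s) →
          ContinuousOn (deriv (deriv u)) (Set.Ioc 0 T) →
          (∀ s ∈ Set.Ioc (0:ℝ) T, |deriv (deriv u) s| ≤ C * s ^ (σ - 2)) →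
          (∀ j, 1 ≤ j → j ≤ M → ∀ s ∈ Set.Icc (t (j - 1)) (t j),
            uI s = u (t (j - 1)) +
              (s - t (j - 1)) * (u (t j) - u (t (j - 1))) / (t j - t (j - 1))) →
          ∀ j m : ℕ, 2 ≤ j → j ≤ m → m ≤ M →
            ∀ s ∈ Set.Ioo (t (j - 1)) (t j),
              |u s - uI s| ≤ C' * min ((t 1) ^ (2 / r) * s ^ (σ - 2 / r))
                ((t m - s) * (t 1) ^ (1 / r) * s ^ (σ - 1 - 1 / r)) :=
  stmt10_general σ r c₁ c₂ C hσ hr hc₂ hC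
end

section
/- (Sign inequality for the L1 operator.) Let α ∈ (0,1) and fix any mesh 0 = t_0 < t_1 < ⋯ < t_M = T. For a sequence (V^j)_{j=0}^M, define ς^m := 1 if V^m ≥ 0 and ς^m := −1 otherwise, and let (|V|^j) denote the sequence of absolute values (|V^j|). Then for every 1 ≤ m ≤ M: ς^m · δ^α V^m ≥ δ^α |V|^m. -/
/-!
Write `δ^α V^m = Γ(1-α)⁻¹ ∑ⱼ (V^j - V^{j-1}) bⱼ`, where `bⱼ` is the mean of the kernel
`(t_m - s)^{-α}` over `[t_{j-1}, t_j]`. The kernel is nonnegative and increases towards `t_m`,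
so `0 ≤ b₁ ≤ ⋯ ≤ b_m`. Since `δ^α` is linear, `ς^m δ^α V^m - δ^α |V|^m = δ^α W^m` with
`W^j = ς^m V^j - |V^j| ≤ 0` and `W^m = 0`, and summation by parts turns this into
`-W^0 b₁ - ∑_{1 ≤ j < m} W^j (b_{j+1} - b_j) ≥ 0`.
-/

/-- The L1 discrete fractional-derivative operator on the mesh `t`. -/
noncomputable def l1 (α : ℝ) (t : ℕ → ℝ) (V : ℕ → ℝ) (m : ℕ) : ℝ :=
  (1 / Real.Gamma (1 - α)) * ∑ j ∈ Finset.Icc 1 m,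
    ((V j - V (j - 1)) / (t j - t (j - 1))) *
      ∫ s in (t (j - 1))..(t j), (t m - s) ^ (-α)

open Finset MeasureTheory

theorem Finset.sum_Icc_sub_mul_eq (b W : ℕ → ℝ) {m : ℕ} (hm : 1 ≤ m) :
    ∑ j ∈ Icc 1 m, (W j - W (j - 1)) * b j
      = W m * b m - W 0 * b 1 - ∑ j ∈ Ico 1 m, W j * (b (j + 1) - b j) := by
  induction m, hm using Nat.le_induction with
  | base => simp [sub_mul]
  | succ n hn ih =>
    rw [sum_Icc_succ_top (by omega), sum_Ico_succ_top hn, ih, Nat.add_sub_cancel]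
    ring

theorem Finset.sum_Icc_sub_mul_nonneg {b W : ℕ → ℝ} {m : ℕ} (hm : 1 ≤ m) (hb₁ : 0 ≤ b 1)
    (hb : MonotoneOn b (Set.Icc 1 m)) (hW : ∀ j < m, W j ≤ 0) (hWm : W m = 0) :
    0 ≤ ∑ j ∈ Finset.Icc 1 m, (W j - W (j - 1)) * b j := by
  rw [sum_Icc_sub_mul_eq b W hm, hWm, zero_mul, zero_sub, sub_nonneg]
  have hinc : ∀ j ∈ Ico 1 m, W j * (b (j + 1) - b j) ≤ 0 := fun j hj => by
    obtain ⟨hj1, hjm⟩ := Finset.mem_Ico.mp hj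
    exact mul_nonpos_of_nonpos_of_nonneg (hW j hjm)
      (sub_nonneg.mpr (hb ⟨hj1, hjm.le⟩ ⟨by omega, hjm⟩ (Nat.le_succ j)))
  linarith [sum_nonpos hinc, mul_nonpos_of_nonpos_of_nonneg (hW 0 hm) hb₁]

theorem integral_div_sub_le_integral_div_sub_of_monotoneOn {f : ℝ → ℝ} {a b c : ℝ}
    (hab : a < b) (hbc : b < c) (hf : MonotoneOn f (Set.Ico a c))
    (hfi : IntervalIntegrable f volume a c) :
    (∫ x in a..b, f x) / (b - a) ≤ (∫ x in b..c, f x) / (c - b) := by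
  have hb : b ∈ Set.Ico a c := ⟨hab.le, hbc⟩
  have hleft : (∫ x in a..b, f x) ≤ (b - a) * f b := by
    simpa using intervalIntegral.integral_mono_on hab.le
      (hfi.mono_set (Set.uIcc_subset_uIcc_left (Set.mem_uIcc_of_le hab.le hbc.le)))
      intervalIntegrable_const
      fun x hx => hf ⟨hx.1, hx.2.trans_lt hbc⟩ hb hx.2
  have hright : (c - b) * f b ≤ ∫ x in b..c, f x := by
    simpa using intervalIntegral.integral_mono_on_of_le_Ioo hbc.le intervalIntegrable_const
      (hfi.mono_set (Set.uIcc_subset_uIcc_right (Set.mem_uIcc_of_le hab.le hbc.le)))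
      fun x hx => hf hb ⟨hab.le.trans hx.1.le, hx.2⟩ hx.1.le
  rw [div_le_div_iff₀ (sub_pos.mpr hab) (sub_pos.mpr hbc)]
  nlinarith [sub_pos.mpr hab, sub_pos.mpr hbc]

theorem monotoneOn_rpow_neg_sub {α : ℝ} (hα : 0 ≤ α) (x : ℝ) :
    MonotoneOn (fun s => (x - s) ^ (-α)) (Set.Iio x) :=
  fun _ _ _ hv huv => Real.rpow_le_rpow_of_nonpos (sub_pos.mpr hv) (by linarith) (by linarith)

theorem intervalIntegrable_rpow_neg_sub {α : ℝ} (hα : α < 1) (x a b : ℝ) :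
    IntervalIntegrable (fun s => (x - s) ^ (-α)) volume a b := by
  simpa using (intervalIntegral.intervalIntegrable_rpow' (r := -α) (by linarith)
    (a := x - a) (b := x - b)).comp_sub_left x

noncomputable def l1Weight (α : ℝ) (t : ℕ → ℝ) (m j : ℕ) : ℝ :=
  (∫ s in t (j - 1)..t j, (t m - s) ^ (-α)) / (t j - t (j - 1))

theorem l1_eq_sum_mul_l1Weight (α : ℝ) (t V : ℕ → ℝ) (m : ℕ) :
    l1 α t V m = 1 / Real.Gamma (1 - α) * ∑ j ∈ Icc 1 m, (V j - V (j - 1)) * l1Weight α t m j := by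
  unfold l1 l1Weight
  congr 1
  exact sum_congr rfl fun j _ => by ring

theorem l1_const_mul_sub (α : ℝ) (t : ℕ → ℝ) (c : ℝ) (V U : ℕ → ℝ) (m : ℕ) :
    c * l1 α t V m - l1 α t U m = l1 α t (fun j => c * V j - U j) m := by
  simp only [l1_eq_sum_mul_l1Weight, mul_sum, ← sum_sub_distrib]
  exact sum_congr rfl fun j _ => by ring

theorem l1Weight_nonneg (α : ℝ) {t : ℕ → ℝ} {m j : ℕ} (ht : MonotoneOn t (Set.Iic m))
    (hj : 1 ≤ j) (hjm : j ≤ m) : 0 ≤ l1Weight α t m j := by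
  have hcell : t (j - 1) ≤ t j := ht (Set.mem_Iic.mpr (by omega)) hjm (by omega)
  refine div_nonneg (intervalIntegral.integral_nonneg hcell fun s hs => ?_) (sub_nonneg.mpr hcell)
  exact Real.rpow_nonneg (sub_nonneg.mpr (hs.2.trans (ht hjm Set.self_mem_Iic hjm))) _

theorem l1Weight_monotoneOn {α : ℝ} (hα₀ : 0 ≤ α) (hα₁ : α < 1) {t : ℕ → ℝ} {m : ℕ}
    (ht : StrictMonoOn t (Set.Iic m)) : MonotoneOn (l1Weight α t m) (Set.Icc 1 m) := by
  refine monotoneOn_of_le_succ Set.ordConnected_Icc fun j _ ⟨hj, _⟩ ⟨_, hjm⟩ => ?_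
  rw [Order.succ_eq_add_one] at hjm ⊢
  have hsub : Set.Ico (t (j - 1)) (t (j + 1)) ⊆ Set.Iio (t m) := fun s hs =>
    hs.2.trans_le (ht.monotoneOn hjm Set.self_mem_Iic hjm)
  simpa [l1Weight] using integral_div_sub_le_integral_div_sub_of_monotoneOn
    (ht (Set.mem_Iic.mpr (by omega)) (Set.mem_Iic.mpr (by omega)) (by omega) : t (j - 1) < t j)
    (ht (Set.mem_Iic.mpr (by omega)) hjm (by omega))
    ((monotoneOn_rpow_neg_sub hα₀ (t m)).mono hsub) (intervalIntegrable_rpow_neg_sub hα₁ _ _ _)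

theorem l1_nonneg_of_nonpos_of_eq_zero {α : ℝ} (hα₀ : 0 ≤ α) (hα₁ : α < 1) {t : ℕ → ℝ} {m : ℕ}
    (ht : StrictMonoOn t (Set.Iic m)) {W : ℕ → ℝ} (hW : ∀ j < m, W j ≤ 0) (hWm : W m = 0) :
    0 ≤ l1 α t W m := by
  rcases Nat.eq_zero_or_pos m with rfl | hm
  · simp [l1]
  rw [l1_eq_sum_mul_l1Weight]
  exact mul_nonneg (one_div_nonneg.mpr (Real.Gamma_pos_of_pos (by linarith)).le)
    (sum_Icc_sub_mul_nonneg hm (l1Weight_nonneg α ht.monotoneOn le_rfl hm)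
      (l1Weight_monotoneOn hα₀ hα₁ ht) hW hWm)

theorem stmt15_general (α : ℝ) (hα : α ∈ Set.Ioo (0:ℝ) 1)
    (M : ℕ) (t : ℕ → ℝ)
    (hmono : ∀ j, 1 ≤ j → j ≤ M → t (j - 1) < t j)
    (V : ℕ → ℝ) (m : ℕ) (hmM : m ≤ M) :
    (if 0 ≤ V m then (1:ℝ) else -1) * l1 α t V m ≥
      l1 α t (fun j => |V j|) m := by
  set ς : ℝ := if 0 ≤ V m then 1 else -1 with hς
  have hmesh : StrictMonoOn t (Set.Iic m) :=
    strictMonoOn_of_lt_succ Set.ordConnected_Iic fun j _ _ hj => by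
      simpa using hmono (j + 1) (by omega) ((Set.mem_Iic.mp hj).trans hmM)
  have hς_abs : |ς| = 1 := by rw [hς]; split_ifs <;> simp
  have hW : ∀ j, ς * V j - |V j| ≤ 0 := fun j =>
    sub_nonpos.mpr ((le_abs_self _).trans (by rw [abs_mul, hς_abs, one_mul]))
  have hWm : ς * V m - |V m| = 0 := by
    rw [hς]
    split_ifs with h
    · rw [abs_of_nonneg h]; ring
    · rw [abs_of_neg (not_le.mp h)]; ring
  rw [ge_iff_le, ← sub_nonneg, l1_const_mul_sub]
  exact l1_nonneg_of_nonpos_of_eq_zero hα.1.le hα.2 hmesh (fun j _ => hW j) hWm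

/-- sign inequality for the L1 operator:
`ς^m δ^α V^m ≥ δ^α |V|^m`, where `ς^m = sign(V^m)`. -/
theorem stmt15 (α T : ℝ) (hα : α ∈ Set.Ioo (0:ℝ) 1) (hT : 0 < T)
    (M : ℕ) (t : ℕ → ℝ) (ht0 : t 0 = 0) (htT : t M = T)
    (hmono : ∀ j, 1 ≤ j → j ≤ M → t (j - 1) < t j)
    (V : ℕ → ℝ) (m : ℕ) (hm1 : 1 ≤ m) (hmM : m ≤ M) :
    (if 0 ≤ V m then (1:ℝ) else -1) * l1 α t V m ≥
      l1 α t (fun j => |V j|) m :=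
  stmt15_general α hα M t hmono V m hmM
end
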